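/- Let C ≥ 1, T > 0 and δ > 0 be real numbers, let e_0 denote Euler's number, and for each integer N ≥ 1 define E(N) := 7·C^N·2^{N−1}·e_0^N / N^{(N−3)/2} + (14·(4C)^{N−1}+1)·T^{2N+1} / N^{N/2}. Then for every η > 0 there exists N₀ such that for all N ≥ N₀ one has N^{2N} · E(N)^{4+δ} ≤ exp( N·log N·(−δ/2 + η) ); equivalently, limsup_{N→∞} log( N^{2N}·E(N)^{4+δ} ) / (N·log N) ≤ −δ/2. In particular N^{2N}·E(N)^{4+δ} → 0, so the computational complexity of quadrature SCaSML (which is at most 8(d+1)N^{2N} realizations and function evaluations) multiplied by the (4+δ)-th power of its error bound stays bounded. -/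

import Mathlib

/-- Convergence factor
`E(N) = 7·C^N·2^{N−1}·e₀^N / N^{(N−3)/2} + (14·(4C)^{N−1}+1)·T^{2N+1} / N^{N/2}`
of the quadrature Multilevel Picard estimator with `N` levels, sample base `N`
and quadrature order `N`. -/
noncomputable def quadFactor (C T : ℝ) (N : ℕ) : ℝ :=
  7 * C ^ N * 2 ^ (N-1) * Real.exp 1 ^ N / (N:ℝ) ^ (((N:ℝ) - 3) / 2)
    + (14 * (4*C) ^ (N-1) + 1) * T ^ (2*N+1) / (N:ℝ) ^ ((N:ℝ) / 2)

set_option maxHeartbeats 1000000 in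
/-- Complexity of quadrature SCaSML, analytic core: for every
`η > 0`, eventually `N^{2N}·E(N)^{4+δ} ≤ exp(N·log N·(−δ/2+η))`; in particular
`N^{2N}·E(N)^{4+δ} → 0`. -/
theorem quad_complexity_asymptotics (C T δ : ℝ) (hC : 1 ≤ C) (hT : 0 < T)
    (hδ : 0 < δ) :
    (∀ η > (0:ℝ), ∃ N₀ : ℕ, ∀ N : ℕ, N₀ ≤ N →
      (N:ℝ) ^ (2*N) * quadFactor C T N ^ (4 + δ)
        ≤ Real.exp ((N:ℝ) * Real.log (N:ℝ) * (-δ/2 + η))) ∧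
    Filter.Tendsto (fun N : ℕ => (N:ℝ) ^ (2*N) * quadFactor C T N ^ (4 + δ))
      Filter.atTop (nhds 0) := by
  have hC0 : (0:ℝ) < C := lt_of_lt_of_le one_pos hC
  set M : ℝ := max T 1 with hMdef
  have hM1 : (1:ℝ) ≤ M := le_max_right _ _
  have hTM : T ≤ M := le_max_left _ _
  have hM0 : (0:ℝ) < M := lt_of_lt_of_le one_pos hM1
  have he2 : (2:ℝ) ≤ Real.exp 1 := by
    have := Real.add_one_le_exp (1:ℝ); linarith
  have he0 : (0:ℝ) < Real.exp 1 := Real.exp_pos 1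
  set A : ℝ := 7 + 15 * M with hAdef
  set B : ℝ := 8 * C * Real.exp 1 * M ^ 2 with hBdef
  have hM2 : (1:ℝ) ≤ M ^ 2 := by nlinarith
  have hCe : (2:ℝ) ≤ C * Real.exp 1 := by nlinarith [mul_nonneg (sub_nonneg.mpr hC) he0.le]
  have hCeM : (2:ℝ) * 1 ≤ (C * Real.exp 1) * M ^ 2 :=
    mul_le_mul hCe hM2 (by norm_num) (by positivity)
  have hA1 : (1:ℝ) ≤ A := by rw [hAdef]; nlinarith
  have hB1 : (1:ℝ) ≤ B := by rw [hBdef]; nlinarith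
  have hA0 : (0:ℝ) < A := lt_of_lt_of_le one_pos hA1
  have hB0 : (0:ℝ) < B := lt_of_lt_of_le one_pos hB1
  -- nonnegativity of the convergence factor
  have hnn : ∀ N : ℕ, 0 ≤ quadFactor C T N := by
    intro N
    unfold quadFactor
    have h1 : (0:ℝ) ≤ (N:ℝ) := Nat.cast_nonneg N
    positivity
  -- the basic upper bound `quadFactor C T N ≤ A·B^N / N^{(N−3)/2}`
  have hbound : ∀ N : ℕ, 1 ≤ N →
      quadFactor C T N ≤ A * B ^ N / (N:ℝ) ^ (((N:ℝ) - 3) / 2) := by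
    intro N hN
    have hN1 : (1:ℝ) ≤ (N:ℝ) := by exact_mod_cast hN
    have hN0 : (0:ℝ) < (N:ℝ) := lt_of_lt_of_le one_pos hN1
    have den_pos : (0:ℝ) < (N:ℝ) ^ (((N:ℝ) - 3) / 2) := Real.rpow_pos_of_pos hN0 _
    have den_le : (N:ℝ) ^ (((N:ℝ) - 3) / 2) ≤ (N:ℝ) ^ ((N:ℝ) / 2) :=
      Real.rpow_le_rpow_of_exponent_le hN1 (by linarith)
    -- first term
    have ht1 : 7 * C ^ N * 2 ^ (N-1) * Real.exp 1 ^ N ≤ 7 * B ^ N := by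
      have h2 : (2:ℝ) ^ (N-1) ≤ 2 ^ N := pow_le_pow_right₀ one_le_two (Nat.sub_le N 1)
      have h3 : 7 * C ^ N * 2 ^ (N-1) * Real.exp 1 ^ N
          ≤ 7 * C ^ N * 2 ^ N * Real.exp 1 ^ N := by
        gcongr
      have h4 : 7 * C ^ N * 2 ^ N * Real.exp 1 ^ N = 7 * (2 * C * Real.exp 1) ^ N := by
        rw [mul_pow, mul_pow]; ring
      have h5 : (2 * C * Real.exp 1) ^ N ≤ B ^ N := by
        apply pow_le_pow_left₀ (by positivity)
        rw [hBdef]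
        nlinarith [mul_nonneg (mul_nonneg hC0.le he0.le) (sub_nonneg.mpr hM2)]
      linarith [h3, h4 ▸ h3, mul_le_mul_of_nonneg_left h5 (by norm_num : (0:ℝ) ≤ 7)]
    -- second term numerator
    have ht2 : (14 * (4*C) ^ (N-1) + 1) * T ^ (2*N+1) ≤ 15 * M * B ^ N := by
      have h4C : (1:ℝ) ≤ 4 * C := by linarith
      have h5 : 14 * (4*C) ^ (N-1) + 1 ≤ 15 * (4*C) ^ N := by
        have h6 : (4*C) ^ (N-1) ≤ (4*C) ^ N := pow_le_pow_right₀ h4C (Nat.sub_le N 1)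
        have h7 : (1:ℝ) ≤ (4*C) ^ N := by
          have := pow_le_pow_left₀ (by norm_num : (0:ℝ) ≤ 1) h4C N
          simpa using this
        linarith
      have h8 : T ^ (2*N+1) ≤ M * (M ^ 2) ^ N := by
        have h9 : T ^ (2*N+1) ≤ M ^ (2*N+1) := pow_le_pow_left₀ hT.le hTM _
        have h10 : M ^ (2*N+1) = M * (M ^ 2) ^ N := by
          rw [← pow_mul]; ring
        linarith [h10 ▸ h9]
      have hTnn : (0:ℝ) ≤ T ^ (2*N+1) := by positivity
      have h11 : (14 * (4*C) ^ (N-1) + 1) * T ^ (2*N+1)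
          ≤ (15 * (4*C) ^ N) * (M * (M ^ 2) ^ N) :=
        mul_le_mul h5 h8 hTnn (by positivity)
      have h12 : (15 * (4*C) ^ N) * (M * (M ^ 2) ^ N) = 15 * M * (4 * C * M ^ 2) ^ N := by
        rw [mul_pow, mul_pow]; ring
      have h13 : (4 * C * M ^ 2) ^ N ≤ B ^ N := by
        apply pow_le_pow_left₀ (by positivity)
        rw [hBdef]
        nlinarith [mul_nonneg (mul_nonneg hC0.le (sub_nonneg.mpr he2)) (sq_nonneg M)]
      calc (14 * (4*C) ^ (N-1) + 1) * T ^ (2*N+1)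
          ≤ 15 * M * (4 * C * M ^ 2) ^ N := by rw [← h12]; exact h11
        _ ≤ 15 * M * B ^ N := by
            exact mul_le_mul_of_nonneg_left h13 (by positivity)
    -- combine
    have key1 : 7 * C ^ N * 2 ^ (N-1) * Real.exp 1 ^ N / (N:ℝ) ^ (((N:ℝ) - 3) / 2)
        ≤ 7 * B ^ N / (N:ℝ) ^ (((N:ℝ) - 3) / 2) :=
      (div_le_div_iff_of_pos_right den_pos).mpr ht1
    have key2 : (14 * (4*C) ^ (N-1) + 1) * T ^ (2*N+1) / (N:ℝ) ^ ((N:ℝ) / 2)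
        ≤ 15 * M * B ^ N / (N:ℝ) ^ (((N:ℝ) - 3) / 2) :=
      div_le_div₀ (by positivity) ht2 den_pos den_le
    have key3 : 7 * B ^ N / (N:ℝ) ^ (((N:ℝ) - 3) / 2)
        + 15 * M * B ^ N / (N:ℝ) ^ (((N:ℝ) - 3) / 2)
        = A * B ^ N / (N:ℝ) ^ (((N:ℝ) - 3) / 2) := by
      rw [← add_div, hAdef]; ring_nf
    unfold quadFactor
    linarith [key1, key2, key3 ▸ (add_le_add key1 key2)]
  -- the main eventual inequality
  have hMain : ∀ η > (0:ℝ), ∃ N₀ : ℕ, ∀ N : ℕ, N₀ ≤ N →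
      (N:ℝ) ^ (2*N) * quadFactor C T N ^ (4 + δ)
        ≤ Real.exp ((N:ℝ) * Real.log (N:ℝ) * (-δ/2 + η)) := by
    intro η hη
    set a : ℝ := Real.log A with hadef
    set b : ℝ := Real.log B with hbdef
    have ha0 : 0 ≤ a := Real.log_nonneg hA1
    have hb0 : 0 ≤ b := Real.log_nonneg hB1
    refine ⟨max (max 3 (⌈3*(4+δ)*a/η⌉₊)) (max (⌈Real.exp (3*(4+δ)*b/η)⌉₊) (⌈9*(4+δ)/(2*η)⌉₊)), ?_⟩
    intro N hN
    have hN3 : 3 ≤ N := le_trans (le_trans (le_max_left _ _) (le_max_left _ _)) hN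
    have hN3R : (3:ℝ) ≤ (N:ℝ) := by exact_mod_cast hN3
    have hN1R : (1:ℝ) ≤ (N:ℝ) := by linarith
    have hN0 : (0:ℝ) < (N:ℝ) := by linarith
    set L : ℝ := Real.log (N:ℝ) with hLdef
    have hL1 : (1:ℝ) ≤ L := by
      have h1 : Real.log 3 ≤ L := Real.log_le_log (by norm_num) hN3R
      have h2 : (1:ℝ) ≤ Real.log 3 := by
        rw [Real.le_log_iff_exp_le (by norm_num)]
        have := Real.exp_one_lt_d9
        linarith
      linarith
    have hL0 : (0:ℝ) < L := lt_of_lt_of_le one_pos hL1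
    -- threshold consequences
    have hcond1 : (4+δ) * a ≤ η/3 * (N:ℝ) * L := by
      have h1 : (3*(4+δ)*a/η : ℝ) ≤ (N:ℝ) := by
        have := le_trans (le_trans (le_max_right _ _) (le_max_left _ _)) hN
        exact_mod_cast (Nat.ceil_le.mp this)
      have h2 : 3*(4+δ)*a ≤ η * (N:ℝ) := by
        rw [div_le_iff₀ hη] at h1; linarith
      have h3 : η/3 * (N:ℝ) * 1 ≤ η/3 * (N:ℝ) * L :=
        mul_le_mul_of_nonneg_left hL1 (by positivity)
      linarith
    have hcond2 : (4+δ) * ((N:ℝ) * b) ≤ η/3 * (N:ℝ) * L := by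
      have h1 : Real.exp (3*(4+δ)*b/η) ≤ (N:ℝ) := by
        have := le_trans (le_trans (le_max_left _ _) (le_max_right _ _)) hN
        exact_mod_cast (Nat.ceil_le.mp this)
      have h2 : 3*(4+δ)*b/η ≤ L := (Real.le_log_iff_exp_le hN0).mpr h1
      have h3 : 3*(4+δ)*b ≤ η * L := by
        rw [div_le_iff₀ hη] at h2; linarith
      have h4 : (4+δ) * b ≤ η/3 * L := by linarith
      calc (4+δ) * ((N:ℝ) * b) = (N:ℝ) * ((4+δ) * b) := by ring
        _ ≤ (N:ℝ) * (η/3 * L) := mul_le_mul_of_nonneg_left h4 hN0.le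
        _ = η/3 * (N:ℝ) * L := by ring
    have hcond3 : (4+δ) * (3/2 * L) ≤ η/3 * (N:ℝ) * L := by
      have h1 : (9*(4+δ)/(2*η) : ℝ) ≤ (N:ℝ) := by
        have := le_trans (le_trans (le_max_right _ _) (le_max_right _ _)) hN
        exact_mod_cast (Nat.ceil_le.mp this)
      have h2 : 9*(4+δ) ≤ 2*η * (N:ℝ) := by
        rw [div_le_iff₀ (by positivity)] at h1; linarith
      have h3 : (4+δ) * (3/2) ≤ η/3 * (N:ℝ) := by linarith
      calc (4+δ) * (3/2 * L) = ((4+δ) * (3/2)) * L := by ring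
        _ ≤ (η/3 * (N:ℝ)) * L := mul_le_mul_of_nonneg_right h3 hL0.le
        _ = η/3 * (N:ℝ) * L := by ring
    -- rewrite the product in exponential form
    have hP : A * B ^ N / (N:ℝ) ^ (((N:ℝ) - 3) / 2)
        = Real.exp (a + (N:ℝ) * b - ((N:ℝ) - 3)/2 * L) := by
      have hPpos : (0:ℝ) < A * B ^ N / (N:ℝ) ^ (((N:ℝ) - 3) / 2) := by positivity
      rw [← Real.exp_log hPpos]
      congr 1
      rw [Real.log_div (by positivity) (by positivity),
        Real.log_mul hA0.ne' (by positivity), Real.log_pow, Real.log_rpow hN0]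
    have hNpow : ((N:ℝ)) ^ (2*N) = Real.exp (2 * (N:ℝ) * L) := by
      rw [← Real.exp_log (pow_pos hN0 (2*N)), Real.log_pow]
      congr 1
      push_cast
      ring
    have step1 : (N:ℝ) ^ (2*N) * quadFactor C T N ^ (4 + δ)
        ≤ (N:ℝ) ^ (2*N) * (A * B ^ N / (N:ℝ) ^ (((N:ℝ) - 3) / 2)) ^ (4 + δ) := by
      exact mul_le_mul_of_nonneg_left
        (Real.rpow_le_rpow (hnn N) (hbound N (le_trans (by norm_num) hN3)) (by linarith))
        (by positivity)
    have step2 : (N:ℝ) ^ (2*N) * (A * B ^ N / (N:ℝ) ^ (((N:ℝ) - 3) / 2)) ^ (4 + δ)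
        = Real.exp (2 * (N:ℝ) * L + (a + (N:ℝ) * b - ((N:ℝ) - 3)/2 * L) * (4 + δ)) := by
      rw [hNpow, hP, ← Real.exp_mul, ← Real.exp_add]
    have step3 : 2 * (N:ℝ) * L + (a + (N:ℝ) * b - ((N:ℝ) - 3)/2 * L) * (4 + δ)
        ≤ (N:ℝ) * L * (-δ/2 + η) := by
      have hid : 2 * (N:ℝ) * L + (a + (N:ℝ) * b - ((N:ℝ) - 3)/2 * L) * (4 + δ)
          = (N:ℝ) * L * (-δ/2) + (4+δ) * a + (4+δ) * ((N:ℝ) * b)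
            + (4+δ) * (3/2 * L) := by ring
      have htgt : (N:ℝ) * L * (-δ/2 + η)
          = (N:ℝ) * L * (-δ/2) + η/3 * (N:ℝ) * L + η/3 * (N:ℝ) * L
            + η/3 * (N:ℝ) * L := by ring
      rw [hid, htgt]
      linarith [hcond1, hcond2, hcond3]
    calc (N:ℝ) ^ (2*N) * quadFactor C T N ^ (4 + δ)
        ≤ (N:ℝ) ^ (2*N) * (A * B ^ N / (N:ℝ) ^ (((N:ℝ) - 3) / 2)) ^ (4 + δ) := step1
      _ = Real.exp (2 * (N:ℝ) * L + (a + (N:ℝ) * b - ((N:ℝ) - 3)/2 * L) * (4 + δ)) := step2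
      _ ≤ Real.exp ((N:ℝ) * L * (-δ/2 + η)) := Real.exp_le_exp.mpr step3
  refine ⟨hMain, ?_⟩
  -- the tendsto statement via squeezing
  obtain ⟨N₀, hN₀⟩ := hMain (δ/4) (by linarith)
  have hlb : ∀ N : ℕ, 0 ≤ (N:ℝ) ^ (2*N) * quadFactor C T N ^ (4 + δ) := by
    intro N
    exact mul_nonneg (by positivity) (Real.rpow_nonneg (hnn N) _)
  have hexp : Filter.Tendsto
      (fun N : ℕ => Real.exp ((N:ℝ) * Real.log (N:ℝ) * (-δ/2 + δ/4)))
      Filter.atTop (nhds 0) := by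
    apply Real.tendsto_exp_atBot.comp
    have h1 : Filter.Tendsto (fun N : ℕ => (N:ℝ) * Real.log (N:ℝ))
        Filter.atTop Filter.atTop :=
      Filter.Tendsto.atTop_mul_atTop₀ tendsto_natCast_atTop_atTop
        (Real.tendsto_log_atTop.comp tendsto_natCast_atTop_atTop)
    exact Filter.Tendsto.atTop_mul_const_of_neg (by linarith) h1
  apply squeeze_zero' (Filter.Eventually.of_forall hlb) ?_ hexp
  exact Filter.eventually_atTop.mpr ⟨N₀, hN₀⟩
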